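/- arXiv:2503.17131 — 3 statements merged into one kernel-verified Lean document; each statement's English description precedes it below -/
import Mathlib

section
/- Let $\gamma$ be a finite connected simple graph in which every vertex has degree at least 3, and suppose $\gamma$ has a cut vertex (i.e., $\gamma$ is not biconnected). Then for every edge $e$ of $\gamma$, the contraction $\gamma/e$ has a cut vertex. Equivalently: if $\gamma$ is a finite connected simple graph with all vertices of degree at least 3 and the contraction $\gamma/e$ is biconnected for some edge $e$, then $\gamma$ is biconnected. -/
/-- The contraction `γ/e` of the edge `e = uv` of a simple graph `γ`: the vertices `u` and `v`
are identified (we keep `u` and drop `v`), the resulting loop is deleted and parallel edges are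
merged. -/
def contractEdge {V : Type*} (G : SimpleGraph V) (u v : V) :
    SimpleGraph {x : V // x ≠ v} where
  Adj a b := a ≠ b ∧
    (G.Adj a b ∨ ((a : V) = u ∧ G.Adj v b) ∨ ((b : V) = u ∧ G.Adj v a))
  symm := by
    constructor
    rintro a b ⟨hab, hco⟩
    refine ⟨hab.symm, ?_⟩
    rcases hco with hco | ⟨h1, h2⟩ | ⟨h1, h2⟩
    · exact Or.inl hco.symm
    · exact Or.inr (Or.inr ⟨h1, h2⟩)
    · exact Or.inr (Or.inl ⟨h1, h2⟩)
  loopless := ⟨fun a ha => ha.1 rfl⟩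

/-- A cut vertex of a graph: a vertex whose deletion, together with its incident edges,
disconnects the graph. -/
def CutVertex {V : Type*} (G : SimpleGraph V) (w : V) : Prop :=
  ¬ (G.induce {x : V | x ≠ w}).Connected

/-- A separation pair of a graph: a pair of distinct vertices whose deletion, together with
their incident edges, disconnects the graph. -/
def SeparationPair {V : Type*} (G : SimpleGraph V) (u v : V) : Prop :=
  u ≠ v ∧ ¬ (G.induce {x : V | x ≠ u ∧ x ≠ v}).Connected

/-- A graph is biconnected if it is connected, has at least 3 vertices, and remains connected
after removing any single vertex together with its incident edges. -/
def Biconnected {V : Type*} (G : SimpleGraph V) : Prop :=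
  3 ≤ Nat.card V ∧ G.Connected ∧ ∀ w : V, (G.induce {x : V | x ≠ w}).Connected

/-- A graph is triconnected if it is biconnected and moreover remains connected after removing
any pair of distinct vertices together with their incident edges. -/
def Triconnected {V : Type*} (G : SimpleGraph V) : Prop :=
  Biconnected G ∧ ∀ u v : V, u ≠ v → (G.induce {x : V | x ≠ u ∧ x ≠ v}).Connected

/-- Transfer reachability along a map that sends edges to reachable pairs. -/
lemma reach_map {A B : Type*} {H : SimpleGraph A} {K : SimpleGraph B} (f : A → B)
    (h : ∀ a b : A, H.Adj a b → K.Reachable (f a) (f b)) {a b : A}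
    (hr : H.Reachable a b) : K.Reachable (f a) (f b) := by
  obtain ⟨p⟩ := hr
  induction p with
  | nil => exact SimpleGraph.Reachable.refl _
  | cons ha _ ih => exact (h _ _ ha).trans ih

/-- A vertex of degree at least 3 has a neighbor distinct from any given vertex. -/
lemma exists_neighbor_ne {V : Type*} [Fintype V] (G : SimpleGraph V)
    (hdeg : ∀ x : V, 3 ≤ (G.neighborSet x).ncard) (x z : V) :
    ∃ y, G.Adj x y ∧ y ≠ z := by
  by_contra hc
  push_neg at hc
  have hsub : G.neighborSet x ⊆ {z} := fun y hy => hc y hy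
  have h1 := Set.ncard_le_ncard hsub (Set.finite_singleton z)
  rw [Set.ncard_singleton] at h1
  have := hdeg x
  omega

/-- Map a vertex of the contraction-with-`w'`-removed back into `V`-minus-`w'.1`. -/
def rmap1 {V : Type*} {v : V} (w' : {x : V // x ≠ v})
    (y : {x : {x : V // x ≠ v} // x ∈ ({x | x ≠ w'} : Set {x : V // x ≠ v})}) :
    {x : V // x ∈ {z : V | z ≠ (w' : V)}} :=
  ⟨y.1.1, fun h => y.2 (Subtype.ext h)⟩

/-- Map a vertex of the contraction-with-`w'`-removed back into `V`-minus-`v`. -/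
def rmap2 {V : Type*} {v : V} (w' : {x : V // x ≠ v})
    (y : {x : {x : V // x ≠ v} // x ∈ ({x | x ≠ w'} : Set {x : V // x ≠ v})}) :
    {x : V // x ∈ {z : V | z ≠ v}} :=
  ⟨y.1.1, y.1.2⟩

/-- If `γ` is a finite connected simple graph with all vertices of degree at least 3 and `γ` has a
cut vertex, then for every edge `uv` of `γ` the contraction `γ/uv` has a cut vertex. -/
theorem stmt_4 {V : Type*} [Fintype V] (G : SimpleGraph V) (hconn : G.Connected)
    (hdeg : ∀ x : V, 3 ≤ (G.neighborSet x).ncard)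
    (hcut : ∃ w : V, CutVertex G w)
    (u v : V) (hadj : G.Adj u v) :
    ∃ w, CutVertex (contractEdge G u v) w := by
  by_contra hc
  push_neg at hc
  simp only [CutVertex, not_not] at hc
  obtain ⟨w, hw⟩ := hcut
  apply hw
  have huv : u ≠ v := hadj.ne
  rw [SimpleGraph.connected_iff]
  by_cases hwu : w = u
  · -- the cut vertex is `u`: remove the merged vertex from the contraction
    subst hwu
    obtain ⟨v', hv'adj, hv'w⟩ := exists_neighbor_ne G hdeg v w
    have hH := hc ⟨w, huv⟩
    have hstep : ∀ a b, ((contractEdge G w v).induce {x | x ≠ ⟨w, huv⟩}).Adj a b →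
        (G.induce {z : V | z ≠ w}).Reachable (rmap1 ⟨w, huv⟩ a) (rmap1 ⟨w, huv⟩ b) := by
      rintro a b ⟨hne, hco⟩
      have hau : (a.1 : V) ≠ w := fun h => a.2 (Subtype.ext h)
      have hbu : (b.1 : V) ≠ w := fun h => b.2 (Subtype.ext h)
      rcases hco with hG | ⟨h1, _⟩ | ⟨h1, _⟩
      · exact SimpleGraph.Adj.reachable
          (show (G.induce {z : V | z ≠ w}).Adj (rmap1 ⟨w, huv⟩ a) (rmap1 ⟨w, huv⟩ b) from hG)
      · exact absurd h1 hau
      · exact absurd h1 hbu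
    have hm : ∀ x : {z : V // z ∈ {z : V | z ≠ w}},
        ∃ y, (G.induce {z : V | z ≠ w}).Reachable x (rmap1 ⟨w, huv⟩ y) := by
      intro x
      by_cases hx : (x : V) = v
      · refine ⟨⟨⟨v', hv'adj.ne'⟩, fun h => hv'w (congrArg Subtype.val h)⟩, ?_⟩
        exact SimpleGraph.Adj.reachable
          (show G.Adj (x : V) v' by rw [hx]; exact hv'adj)
      · exact ⟨⟨⟨x.1, hx⟩, fun h => x.2 (congrArg Subtype.val h)⟩,
          SimpleGraph.Reachable.refl _⟩
    constructor
    · intro x y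
      obtain ⟨mx, hmx⟩ := hm x
      obtain ⟨my, hmy⟩ := hm y
      exact (hmx.trans (reach_map _ hstep (hH.preconnected mx my))).trans hmy.symm
    · exact ⟨⟨v, huv.symm⟩⟩
  · by_cases hwv : w = v
    · -- the cut vertex is `v`: remove the merged vertex from the contraction
      subst hwv
      obtain ⟨u', hu'adj, hu'w⟩ := exists_neighbor_ne G hdeg u w
      have hH := hc ⟨u, huv⟩
      have hstep : ∀ a b, ((contractEdge G u w).induce {x | x ≠ ⟨u, huv⟩}).Adj a b →
          (G.induce {z : V | z ≠ w}).Reachable (rmap2 ⟨u, huv⟩ a) (rmap2 ⟨u, huv⟩ b) := by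
        rintro a b ⟨hne, hco⟩
        have hau : (a.1 : V) ≠ u := fun h => a.2 (Subtype.ext h)
        have hbu : (b.1 : V) ≠ u := fun h => b.2 (Subtype.ext h)
        rcases hco with hG | ⟨h1, _⟩ | ⟨h1, _⟩
        · exact SimpleGraph.Adj.reachable
            (show (G.induce {z : V | z ≠ w}).Adj (rmap2 ⟨u, huv⟩ a) (rmap2 ⟨u, huv⟩ b) from hG)
        · exact absurd h1 hau
        · exact absurd h1 hbu
      have hm : ∀ x : {z : V // z ∈ {z : V | z ≠ w}},
          ∃ y, (G.induce {z : V | z ≠ w}).Reachable x (rmap2 ⟨u, huv⟩ y) := by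
        intro x
        by_cases hx : (x : V) = u
        · refine ⟨⟨⟨u', hu'w⟩, fun h => hu'adj.ne' (congrArg Subtype.val h)⟩, ?_⟩
          exact SimpleGraph.Adj.reachable
            (show G.Adj (x : V) u' by rw [hx]; exact hu'adj)
        · exact ⟨⟨⟨x.1, x.2⟩, fun h => hx (congrArg Subtype.val h)⟩,
            SimpleGraph.Reachable.refl _⟩
      constructor
      · intro x y
        obtain ⟨mx, hmx⟩ := hm x
        obtain ⟨my, hmy⟩ := hm y
        exact (hmx.trans (reach_map _ hstep (hH.preconnected mx my))).trans hmy.symm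
      · exact ⟨⟨u, huv⟩⟩
    · -- `w` is distinct from both `u` and `v`: remove `w` from the contraction
      have hvw : v ≠ w := fun h => hwv h.symm
      have huw : u ≠ w := fun h => hwu h.symm
      have hH := hc ⟨w, hwv⟩
      have hstep : ∀ a b, ((contractEdge G u v).induce {x | x ≠ ⟨w, hwv⟩}).Adj a b →
          (G.induce {z : V | z ≠ w}).Reachable (rmap1 ⟨w, hwv⟩ a) (rmap1 ⟨w, hwv⟩ b) := by
        rintro a b ⟨hne, hco⟩
        have haw : (a.1 : V) ≠ w := fun h => a.2 (Subtype.ext h)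
        have hbw : (b.1 : V) ≠ w := fun h => b.2 (Subtype.ext h)
        rcases hco with hG | ⟨h1, h2⟩ | ⟨h1, h2⟩
        · exact SimpleGraph.Adj.reachable
            (show (G.induce {z : V | z ≠ w}).Adj (rmap1 ⟨w, hwv⟩ a) (rmap1 ⟨w, hwv⟩ b) from hG)
        · have h1' : (a.1 : V) = u := h1
          refine (SimpleGraph.Adj.reachable ?_).trans
            (SimpleGraph.Adj.reachable
              (show (G.induce {z : V | z ≠ w}).Adj ⟨v, hvw⟩ (rmap1 ⟨w, hwv⟩ b) from h2))
          show G.Adj (a.1 : V) v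
          rw [h1']; exact hadj
        · have h1' : (b.1 : V) = u := h1
          refine (SimpleGraph.Adj.reachable
            (show (G.induce {z : V | z ≠ w}).Adj (rmap1 ⟨w, hwv⟩ a) ⟨v, hvw⟩ from h2.symm)).trans
            (SimpleGraph.Adj.reachable ?_)
          show G.Adj v (b.1 : V)
          rw [h1']; exact hadj.symm
      have hm : ∀ x : {z : V // z ∈ {z : V | z ≠ w}},
          ∃ y, (G.induce {z : V | z ≠ w}).Reachable x (rmap1 ⟨w, hwv⟩ y) := by
        intro x
        by_cases hx : (x : V) = v
        · refine ⟨⟨⟨u, huv⟩, fun h => huw (congrArg Subtype.val h)⟩, ?_⟩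
          exact SimpleGraph.Adj.reachable
            (show G.Adj (x : V) u by rw [hx]; exact hadj.symm)
        · exact ⟨⟨⟨x.1, hx⟩, fun h => x.2 (congrArg Subtype.val h)⟩,
            SimpleGraph.Reachable.refl _⟩
      constructor
      · intro x y
        obtain ⟨mx, hmx⟩ := hm x
        obtain ⟨my, hmy⟩ := hm y
        exact (hmx.trans (reach_map _ hstep (hH.preconnected mx my))).trans hmy.symm
      · exact ⟨⟨u, huw⟩⟩
end

section
/- Let $\gamma$ be a finite simple biconnected graph in which every vertex has degree at least 3, and suppose $\gamma$ has a separation pair (i.e., $\gamma$ is not triconnected). Let $e = uv$ be an edge of $\gamma$ such that $u$ and $v$ have no common neighbor (so that the contraction $\gamma/e$ is again a simple graph with the same edges). Then the contraction $\gamma/e$ is not triconnected: it has a cut vertex or a separation pair. -/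
open SimpleGraph

section Aux
variable {V : Type*}

/-- Monotonicity of reachability under enlarging the induced vertex set. -/
lemma induce_reach_mono {G : SimpleGraph V} {S T : Set V} (hST : S ⊆ T)
    {a b : S} (h : (G.induce S).Reachable a b) :
    (G.induce T).Reachable ⟨a, hST a.2⟩ ⟨b, hST b.2⟩ :=
  h.map (G.induceHomOfLE hST).toHom

/-- Adding back a vertex with a neighbour keeps an induced subgraph connected. -/
lemma connected_insert {G : SimpleGraph V} {S : Set V} {x t : V}
    (hS : (G.induce S).Connected) (ht : t ∈ S) (hxt : G.Adj x t) :
    (G.induce (insert x S)).Connected := by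
  rw [connected_iff] at hS ⊢
  obtain ⟨hpre, -⟩ := hS
  refine ⟨?_, ⟨⟨x, Set.mem_insert x S⟩⟩⟩
  have key : ∀ a : (insert x S : Set V),
      (G.induce (insert x S)).Reachable a ⟨t, Set.mem_insert_of_mem _ ht⟩ := by
    rintro ⟨a, ha⟩
    rcases ha with rfl | ha
    · exact Adj.reachable (by simpa using hxt)
    · exact induce_reach_mono (Set.subset_insert x S) (hpre ⟨a, ha⟩ ⟨t, ht⟩)
  intro a b
  exact (key a).trans (key b).symm

/-- If `u ∉ S` then the contraction induced on `S` is isomorphic to `G` induced on `S`. -/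
noncomputable def contractInduceIso (G : SimpleGraph V) (u v : V) {S : Set V}
    (huS : u ∉ S) (hvS : v ∉ S) :
    ((contractEdge G u v).induce (Subtype.val ⁻¹' S)) ≃g (G.induce S) where
  toFun x := ⟨x.1.1, x.2⟩
  invFun y := ⟨⟨y.1, fun h => hvS (h ▸ y.2)⟩, y.2⟩
  left_inv x := Subtype.ext (Subtype.ext rfl)
  right_inv y := rfl
  map_rel_iff' := by
    rintro ⟨⟨a, hav⟩, haS⟩ ⟨⟨b, hbv⟩, hbS⟩
    simp only [comap_adj, Function.Embedding.coeFn_mk, Equiv.coe_fn_mk]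
    constructor
    · intro h
      have h' : G.Adj a b := h
      exact ⟨fun hab => h'.ne (congrArg (fun z => (z.1 : V)) hab), Or.inl h'⟩
    · rintro ⟨hne, h | ⟨ha, -⟩ | ⟨hb, -⟩⟩
      · exact h
      · exact absurd (ha ▸ haS) huS
      · exact absurd (hb ▸ hbS) huS

/-- Walks in the contraction with `u, v ∈ S` lift to `G`. -/
lemma contract_connected_lift (G : SimpleGraph V) {u v : V} (huv : G.Adj u v)
    {S : Set V} (huS : u ∈ S) (hvS : v ∈ S)
    (h : ((contractEdge G u v).induce (Subtype.val ⁻¹' S)).Connected) :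
    (G.induce S).Connected := by
  classical
  set T : Set {x : V // x ≠ v} := (Subtype.val ⁻¹' S) with hT
  have step : ∀ {a b : T}, ((contractEdge G u v).induce T).Adj a b →
      (G.induce S).Reachable ⟨a.1.1, a.2⟩ ⟨b.1.1, b.2⟩ := by
    rintro ⟨⟨a, hav⟩, haS⟩ ⟨⟨b, hbv⟩, hbS⟩ had
    have had' : (contractEdge G u v).Adj ⟨a, hav⟩ ⟨b, hbv⟩ := had
    obtain ⟨-, hG | ⟨ha, hvb⟩ | ⟨hb, hva⟩⟩ := had'
    · exact Adj.reachable hG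
    · have ha' : a = u := ha
      subst ha'
      have e1 : (G.induce S).Adj ⟨a, haS⟩ ⟨v, hvS⟩ := huv
      have e2 : (G.induce S).Adj ⟨v, hvS⟩ ⟨b, hbS⟩ := hvb
      exact (Adj.reachable e1).trans (Adj.reachable e2)
    · have hb' : b = u := hb
      subst hb'
      have e1 : (G.induce S).Adj ⟨a, haS⟩ ⟨v, hvS⟩ := hva.symm
      have e2 : (G.induce S).Adj ⟨v, hvS⟩ ⟨b, hbS⟩ := huv.symm
      exact (Adj.reachable e1).trans (Adj.reachable e2)
  have lift : ∀ {a b : T}, ((contractEdge G u v).induce T).Reachable a b →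
      (G.induce S).Reachable ⟨a.1.1, a.2⟩ ⟨b.1.1, b.2⟩ := by
    intro a b hr
    obtain ⟨w⟩ := hr
    induction w with
    | nil => exact Reachable.refl _
    | cons hadj _ ih => exact (step hadj).trans ih
  rw [connected_iff] at h ⊢
  obtain ⟨hpre, -⟩ := h
  refine ⟨?_, ⟨⟨u, huS⟩⟩⟩
  -- every vertex of S is reachable to u
  have key : ∀ x : S, (G.induce S).Reachable x ⟨u, huS⟩ := by
    rintro ⟨x, hxS⟩
    by_cases hxv : x = v
    · subst hxv
      exact Adj.reachable (huv.symm : (G.induce S).Adj ⟨x, hxS⟩ ⟨u, huS⟩)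
    · have hr := hpre (⟨⟨x, hxv⟩, hxS⟩ : T) (⟨⟨u, huv.ne⟩, huS⟩ : T)
      exact lift hr
  intro a b
  exact (key a).trans (key b).symm

/-- From the degree hypothesis, find a neighbour avoiding two given vertices. -/
lemma exists_nbr {G : SimpleGraph V} [Fintype V] {d : V} (hdeg : 3 ≤ (G.neighborSet d).ncard)
    (c w : V) : ∃ t, G.Adj d t ∧ t ≠ c ∧ t ≠ w := by
  by_contra hcon
  push_neg at hcon
  have hsub : G.neighborSet d ⊆ {c, w} := by
    intro t ht
    by_cases htc : t = c
    · exact htc ▸ Set.mem_insert _ _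
    · exact (hcon t ht htc) ▸ Set.mem_insert_of_mem _ rfl
  have : (G.neighborSet d).ncard ≤ ({c, w} : Set V).ncard :=
    Set.ncard_le_ncard hsub (Set.toFinite _)
  have h2 : ({c, w} : Set V).ncard ≤ 2 := by
    refine le_trans (Set.ncard_insert_le _ _) ?_
    simp [Set.ncard_singleton]
  omega

end Aux

/-- Let `γ` be a finite simple biconnected graph with all vertices of degree at least 3 which has a
separation pair (i.e. is not triconnected).  Let `uv` be an edge of `γ` such that `u` and `v`
have no common neighbour.  Then the contraction `γ/uv` is not triconnected: it has a cut vertex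
or a separation pair. -/
theorem stmt_5 {V : Type*} [Fintype V] (G : SimpleGraph V)
    (hbi : Biconnected G)
    (hdeg : ∀ x : V, 3 ≤ (G.neighborSet x).ncard)
    (hsep : ∃ a b : V, SeparationPair G a b)
    (u v : V) (hadj : G.Adj u v)
    (hcommon : ∀ w : V, ¬ (G.Adj u w ∧ G.Adj v w)) :
    (∃ w, CutVertex (contractEdge G u v) w) ∨
      (∃ a b, SeparationPair (contractEdge G u v) a b) := by
  classical
  obtain ⟨a, b, hab, hdis⟩ := hsep
  have hune : u ≠ v := hadj.ne
  -- helper for the "one of a,b equals u or v" case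
  have case2 : ∀ c d w : V, ((c = u ∧ d = v) ∨ (c = v ∧ d = u)) → w ≠ u → w ≠ v →
      ¬ (G.induce {x : V | x ≠ c ∧ x ≠ w}).Connected →
      ∃ a b, SeparationPair (contractEdge G u v) a b := by
    intro c d w hcd hwu hwv hdisc
    have hwv' : (w : V) ≠ v := hwv
    refine ⟨⟨u, hune⟩, ⟨w, hwv⟩, ?_, ?_⟩
    · intro h
      exact hwu (congrArg Subtype.val h).symm
    · intro hcon
      apply hdisc
      -- rewrite the removed set into the `↑x ∈ S` form
      set S : Set V := {x | x ≠ u ∧ x ≠ v ∧ x ≠ w} with hS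
      have hset : {x : {x : V // x ≠ v} | x ≠ ⟨u, hune⟩ ∧ x ≠ ⟨w, hwv⟩}
          = (Subtype.val ⁻¹' S : Set {x : V // x ≠ v}) := by
        ext x
        simp only [Set.mem_setOf_eq, Set.mem_preimage, hS, ne_eq, Subtype.ext_iff]
        exact ⟨fun ⟨h1, h2⟩ => ⟨h1, x.2, h2⟩, fun ⟨h1, _, h3⟩ => ⟨h1, h3⟩⟩
      rw [hset] at hcon
      have huS : u ∉ S := by simp [hS]
      have hvS : v ∉ S := by simp [hS, hune.symm]
      have hconS : (G.induce S).Connected :=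
        (contractInduceIso G u v huS hvS).connected_iff.mp hcon
      -- add back the vertex d
      obtain ⟨t, hdt, htc', htw⟩ := exists_nbr (hdeg d) (if c = u then u else v) w
      have htS : t ∈ S := by
        rcases hcd with ⟨rfl, rfl⟩ | ⟨rfl, rfl⟩
        · simp only [if_pos rfl] at htc'
          exact ⟨htc', hdt.ne', htw⟩
        · simp only [if_neg hune.symm] at htc'
          exact ⟨hdt.ne', htc', htw⟩
      have hins := connected_insert hconS htS hdt
      have hins_set : insert d S = {x : V | x ≠ c ∧ x ≠ w} := by
        ext x
        simp only [Set.mem_insert_iff, hS, Set.mem_setOf_eq]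
        constructor
        · rintro (rfl | ⟨h1, h2, h3⟩)
          · rcases hcd with ⟨rfl, rfl⟩ | ⟨rfl, rfl⟩
            · exact ⟨hune.symm, hwv.symm⟩
            · exact ⟨hune, hwu.symm⟩
          · rcases hcd with ⟨rfl, rfl⟩ | ⟨rfl, rfl⟩
            · exact ⟨h1, h3⟩
            · exact ⟨h2, h3⟩
        · rintro ⟨h1, h2⟩
          by_cases hxd : x = d
          · exact Or.inl hxd
          · rcases hcd with ⟨rfl, rfl⟩ | ⟨rfl, rfl⟩
            · exact Or.inr ⟨h1, hxd, h2⟩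
            · exact Or.inr ⟨hxd, h1, h2⟩
      rw [hins_set] at hins
      exact hins
  by_cases hau : a = u
  · by_cases hbv : b = v
    · -- {a,b} = {u,v} : cut vertex u*
      left
      refine ⟨⟨u, hune⟩, ?_⟩
      intro hcon
      apply hdis
      rw [hau, hbv]
      set S : Set V := {x | x ≠ u ∧ x ≠ v} with hS
      have hset : {x : {x : V // x ≠ v} | x ≠ ⟨u, hune⟩}
          = (Subtype.val ⁻¹' S : Set {x : V // x ≠ v}) := by
        ext x
        simp only [Set.mem_setOf_eq, Set.mem_preimage, hS, ne_eq, Subtype.ext_iff]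
        exact ⟨fun h => ⟨h, x.2⟩, fun h => h.1⟩
      rw [hset] at hcon
      have huS : u ∉ S := by simp [hS]
      have hvS : v ∉ S := by simp [hS, hune.symm]
      exact (contractInduceIso G u v huS hvS).connected_iff.mp hcon
    · -- a = u, b ∉ {u,v}
      right
      have hbu : b ≠ u := fun h => hab (hau.trans h.symm)
      refine case2 u v b (Or.inl ⟨rfl, rfl⟩) hbu hbv ?_
      rw [hau] at hdis
      exact hdis
  · by_cases hav : a = v
    · by_cases hbu : b = u
      · -- {a,b} = {v,u} : cut vertex u*
        left
        refine ⟨⟨u, hune⟩, ?_⟩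
        intro hcon
        apply hdis
        rw [hav, hbu]
        set S : Set V := {x | x ≠ v ∧ x ≠ u} with hS
        have hset : {x : {x : V // x ≠ v} | x ≠ ⟨u, hune⟩}
            = (Subtype.val ⁻¹' S : Set {x : V // x ≠ v}) := by
          ext x
          simp only [Set.mem_setOf_eq, Set.mem_preimage, hS, ne_eq, Subtype.ext_iff]
          exact ⟨fun h => ⟨x.2, h⟩, fun h => h.2⟩
        rw [hset] at hcon
        have huS : u ∉ S := by simp [hS, hune.symm]
        have hvS : v ∉ S := by simp [hS]
        exact (contractInduceIso G u v huS hvS).connected_iff.mp hcon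
      · -- a = v, b ∉ {u,v}
        right
        have hbv : b ≠ v := fun h => hab (hav.trans h.symm)
        refine case2 v u b (Or.inr ⟨rfl, rfl⟩) hbu hbv ?_
        rw [hav] at hdis
        exact hdis
    · by_cases hbu : b = u
      · -- b = u, a ∉ {u,v}
        right
        refine case2 u v a (Or.inl ⟨rfl, rfl⟩) hau hav ?_
        intro h
        apply hdis
        rw [hbu]
        have hcomm : {x : V | x ≠ u ∧ x ≠ a} = {x : V | x ≠ a ∧ x ≠ u} := by
          ext x; exact and_comm
        rwa [hcomm] at h
      · by_cases hbv : b = v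
        · -- b = v, a ∉ {u,v}
          right
          refine case2 v u a (Or.inr ⟨rfl, rfl⟩) hau hav ?_
          intro h
          apply hdis
          rw [hbv]
          have hcomm : {x : V | x ≠ v ∧ x ≠ a} = {x : V | x ≠ a ∧ x ≠ v} := by
            ext x; exact and_comm
          rwa [hcomm] at h
        · -- neither a nor b is u or v
          right
          refine ⟨⟨a, hav⟩, ⟨b, hbv⟩, fun h => hab (congrArg Subtype.val h), ?_⟩
          intro hcon
          apply hdis
          set S : Set V := {x | x ≠ a ∧ x ≠ b} with hS
          have hset : {x : {x : V // x ≠ v} | x ≠ ⟨a, hav⟩ ∧ x ≠ ⟨b, hbv⟩}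
              = (Subtype.val ⁻¹' S : Set {x : V // x ≠ v}) := by
            ext x
            simp only [Set.mem_setOf_eq, Set.mem_preimage, hS, ne_eq, Subtype.ext_iff]
          rw [hset] at hcon
          have huS : u ∈ S := ⟨fun h => hau h.symm, fun h => hbu h.symm⟩
          have hvS : v ∈ S := ⟨fun h => hav h.symm, fun h => hbv h.symm⟩
          exact contract_connected_lift G hadj huS hvS hcon
end

section
/- Let $\gamma$ be a finite connected simple graph in which every vertex has degree at least 3, and let $e = uv$ be an edge of $\gamma$ such that $u$ and $v$ have no common neighbor. If the contraction $\gamma/e$ is triconnected, then $\gamma$ is triconnected. -/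
section Auxiliary

open SimpleGraph

variable {V : Type*}

/-- Reachability in an induced subgraph is monotone in the induced set. -/
lemma aux_reach_mono (G : SimpleGraph V) {s t : Set V} (hst : s ⊆ t)
    {a b : s} (h : (G.induce s).Reachable a b) :
    (G.induce t).Reachable ⟨a.1, hst a.2⟩ ⟨b.1, hst b.2⟩ :=
  h.map (G.induceHomOfLE hst).toHom

/-- Adding a vertex adjacent to a connected induced subgraph keeps it connected. -/
lemma aux_insert (G : SimpleGraph V) {s : Set V} {a b : V} (hb : b ∈ s)
    (hab : G.Adj a b) (hc : (G.induce s).Connected) :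
    (G.induce (insert a s)).Connected := by
  have hsub : s ⊆ insert a s := Set.subset_insert a s
  rw [SimpleGraph.connected_iff]
  refine ⟨fun x y => ?_, ⟨⟨a, Set.mem_insert a s⟩⟩⟩
  have key : ∀ x : (insert a s : Set V), (G.induce (insert a s)).Reachable x ⟨b, hsub hb⟩ := by
    rintro ⟨x, hx⟩
    rcases Set.mem_insert_iff.1 hx with rfl | hx'
    · exact SimpleGraph.Adj.reachable (by simpa using hab)
    · exact aux_reach_mono G hsub (hc.preconnected ⟨x, hx'⟩ ⟨b, hb⟩)
  exact (key x).trans (key y).symm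

/-- A vertex of degree at least 3 has a neighbour avoiding any two prescribed vertices. -/
lemma aux_nbr (G : SimpleGraph V) [Fintype V] {x : V} (h3 : 3 ≤ (G.neighborSet x).ncard)
    (a b : V) : ∃ y, G.Adj x y ∧ y ≠ a ∧ y ≠ b := by
  have hne : (G.neighborSet x \ {a, b}).Nonempty := by
    by_contra hne
    rw [Set.not_nonempty_iff_eq_empty, Set.diff_eq_empty] at hne
    have h1 := Set.ncard_le_ncard hne (Set.toFinite _)
    have h2 : ({a, b} : Set V).ncard ≤ 2 := by
      refine le_trans (Set.ncard_insert_le _ _) ?_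
      simp [Set.ncard_singleton]
    omega
  obtain ⟨y, hy, hy2⟩ := hne
  simp only [Set.mem_insert_iff, Set.mem_singleton_iff, not_or] at hy2
  exact ⟨y, hy, hy2.1, hy2.2⟩

/-- On a set of vertices avoiding both `u` and `v`, the contraction induces the same graph as
the original graph; hence connectivity transfers. -/
lemma aux_exact (G : SimpleGraph V) (u v : V) {T : Set V} (hu : u ∉ T) (hv : v ∉ T)
    (h : ((contractEdge G u v).induce {y : {x : V // x ≠ v} | (y : V) ∈ T}).Connected) :
    (G.induce T).Connected := by
  have e : ((contractEdge G u v).induce {y : {x : V // x ≠ v} | (y : V) ∈ T}) ≃g G.induce T := by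
    refine ⟨⟨fun y => ⟨y.1.1, y.2⟩, fun x => ⟨⟨x.1, fun hxv => hv (hxv ▸ x.2)⟩, x.2⟩,
      fun y => rfl, fun x => rfl⟩, ?_⟩
    rintro ⟨⟨a, hav⟩, ha⟩ ⟨⟨b, hbv⟩, hb⟩
    simp only [comap_adj, Function.Embedding.coe_subtype, Equiv.coe_fn_mk]
    constructor
    · intro hab
      refine ⟨fun heq => hab.ne (by simpa using congrArg Subtype.val heq), Or.inl hab⟩
    · rintro ⟨hne, hab | ⟨h1, h2⟩ | ⟨h1, h2⟩⟩
      · exact hab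
      · exact absurd (h1 ▸ ha) hu
      · exact absurd (h1 ▸ hb) hu
  exact e.connected_iff.1 h

/-- Lifting connectivity from the contraction back to the graph, when both `u` and `v` are
among the kept vertices. -/
lemma aux_lift (G : SimpleGraph V) {u v : V} (hadj : G.Adj u v) {P : V → Prop}
    (hu : P u) (hv : P v)
    (h : ((contractEdge G u v).induce {y : {x : V // x ≠ v} | P (y : V)}).Connected) :
    (G.induce {x | P x}).Connected := by
  have huv : u ≠ v := hadj.ne
  set S : Set {x : V // x ≠ v} := {y | P (y : V)} with hS
  have lift : ∀ {a b : S}, ((contractEdge G u v).induce S).Walk a b →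
      (G.induce {x | P x}).Reachable ⟨a.1.1, a.2⟩ ⟨b.1.1, b.2⟩ := by
    intro a b p
    induction p with
    | nil => exact Reachable.refl _
    | @cons a c b hac p ih =>
      refine Reachable.trans ?_ ih
      obtain ⟨hne, hab | ⟨h1, h2⟩ | ⟨h1, h2⟩⟩ := hac
      · exact SimpleGraph.Adj.reachable hab
      · have e1 : (⟨a.1.1, a.2⟩ : {x | P x}) = ⟨u, hu⟩ := Subtype.ext h1
        rw [e1]
        refine Reachable.trans
          (SimpleGraph.Adj.reachable
            (show (G.induce {x | P x}).Adj ⟨u, hu⟩ ⟨v, hv⟩ from hadj))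
          (SimpleGraph.Adj.reachable
            (show (G.induce {x | P x}).Adj ⟨v, hv⟩ ⟨c.1.1, c.2⟩ from h2))
      · have e1 : (⟨c.1.1, c.2⟩ : {x | P x}) = ⟨u, hu⟩ := Subtype.ext h1
        rw [e1]
        refine Reachable.trans
          (SimpleGraph.Adj.reachable
            (show (G.induce {x | P x}).Adj ⟨a.1.1, a.2⟩ ⟨v, hv⟩ from h2.symm))
          (SimpleGraph.Adj.reachable
            (show (G.induce {x | P x}).Adj ⟨v, hv⟩ ⟨u, hu⟩ from hadj.symm))
  rw [SimpleGraph.connected_iff]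
  refine ⟨fun x y => ?_, ⟨⟨u, hu⟩⟩⟩
  have key : ∀ x : {x | P x}, (G.induce {x | P x}).Reachable x ⟨u, hu⟩ := by
    rintro ⟨x, hx⟩
    by_cases hxv : x = v
    · subst hxv
      exact SimpleGraph.Adj.reachable
        (show (G.induce {x | P x}).Adj ⟨x, hx⟩ ⟨u, hu⟩ from hadj.symm)
    · obtain ⟨p⟩ := h.preconnected ⟨⟨x, hxv⟩, hx⟩ ⟨⟨u, huv⟩, hu⟩
      exact lift p
  exact (key x).trans (key y).symm

end Auxiliary

/-- Let `γ` be a finite connected simple graph with all vertices of degree at least 3 and let `uv`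
be an edge of `γ` such that `u` and `v` have no common neighbour.  If the contraction `γ/uv` is
triconnected, then `γ` is triconnected. -/
theorem stmt_6 {V : Type*} [Fintype V] (G : SimpleGraph V) (hconn : G.Connected)
    (hdeg : ∀ x : V, 3 ≤ (G.neighborSet x).ncard)
    (u v : V) (hadj : G.Adj u v)
    (hcommon : ∀ w : V, ¬ (G.Adj u w ∧ G.Adj v w))
    (htri : Triconnected (contractEdge G u v)) :
    Triconnected G := by
  classical
  obtain ⟨⟨hcard3, hHconn, hbi⟩, hpairs⟩ := htri
  have huv : u ≠ v := hadj.ne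
  set u' : {x : V // x ≠ v} := ⟨u, huv⟩ with hu'def
  -- G with both u and v removed is connected
  have hGuv : (G.induce {x : V | x ≠ u ∧ x ≠ v}).Connected := by
    refine aux_exact G u v (by simp) (by simp) ?_
    have h := hbi u'
    have hset : {y : {x : V // x ≠ v} | y ≠ u'} =
        {y : {x : V // x ≠ v} | (y : V) ∈ {x : V | x ≠ u ∧ x ≠ v}} := by
      ext y
      simp only [Set.mem_setOf_eq, hu'def, Ne, Subtype.ext_iff]
      exact ⟨fun h => ⟨h, y.2⟩, fun h => h.1⟩
    rw [hset] at h
    exact h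
  -- the pair cases with one vertex in {u, v}
  have case_uw : ∀ w : V, w ≠ u → w ≠ v →
      (G.induce {x : V | x ≠ u ∧ x ≠ w}).Connected := by
    intro w hwu hwv
    have hT : (G.induce {x : V | x ≠ u ∧ x ≠ v ∧ x ≠ w}).Connected := by
      refine aux_exact G u v (by simp) (by simp) ?_
      have h := hpairs u' ⟨w, hwv⟩ (fun h => hwu (congrArg Subtype.val h).symm)
      have hset : {y : {x : V // x ≠ v} | y ≠ u' ∧ y ≠ ⟨w, hwv⟩} =
          {y : {x : V // x ≠ v} | (y : V) ∈ {x : V | x ≠ u ∧ x ≠ v ∧ x ≠ w}} := by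
        ext y
        simp only [Set.mem_setOf_eq, hu'def, Ne, Subtype.ext_iff]
        exact ⟨fun h => ⟨h.1, y.2, h.2⟩, fun h => ⟨h.1, h.2.2⟩⟩
      rw [hset] at h
      exact h
    obtain ⟨y, hy, hyu, hyw⟩ := aux_nbr G (hdeg v) u w
    have hmem : y ∈ {x : V | x ≠ u ∧ x ≠ v ∧ x ≠ w} := ⟨hyu, hy.ne', hyw⟩
    have h := aux_insert G hmem hy hT
    have hset : insert v {x : V | x ≠ u ∧ x ≠ v ∧ x ≠ w} = {x : V | x ≠ u ∧ x ≠ w} := by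
      ext x
      simp only [Set.mem_insert_iff, Set.mem_setOf_eq]
      constructor
      · rintro (rfl | ⟨h1, _, h3⟩)
        · exact ⟨huv.symm, hwv.symm⟩
        · exact ⟨h1, h3⟩
      · intro hx
        by_cases hxv : x = v
        · exact Or.inl hxv
        · exact Or.inr ⟨hx.1, hxv, hx.2⟩
    rw [hset] at h
    exact h
  have case_vw : ∀ w : V, w ≠ u → w ≠ v →
      (G.induce {x : V | x ≠ v ∧ x ≠ w}).Connected := by
    intro w hwu hwv
    have hT : (G.induce {x : V | x ≠ u ∧ x ≠ v ∧ x ≠ w}).Connected := by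
      refine aux_exact G u v (by simp) (by simp) ?_
      have h := hpairs u' ⟨w, hwv⟩ (fun h => hwu (congrArg Subtype.val h).symm)
      have hset : {y : {x : V // x ≠ v} | y ≠ u' ∧ y ≠ ⟨w, hwv⟩} =
          {y : {x : V // x ≠ v} | (y : V) ∈ {x : V | x ≠ u ∧ x ≠ v ∧ x ≠ w}} := by
        ext y
        simp only [Set.mem_setOf_eq, hu'def, Ne, Subtype.ext_iff]
        exact ⟨fun h => ⟨h.1, y.2, h.2⟩, fun h => ⟨h.1, h.2.2⟩⟩
      rw [hset] at h
      exact h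
    obtain ⟨y, hy, hyv, hyw⟩ := aux_nbr G (hdeg u) v w
    have hmem : y ∈ {x : V | x ≠ u ∧ x ≠ v ∧ x ≠ w} := ⟨hy.ne', hyv, hyw⟩
    have h := aux_insert G hmem hy hT
    have hset : insert u {x : V | x ≠ u ∧ x ≠ v ∧ x ≠ w} = {x : V | x ≠ v ∧ x ≠ w} := by
      ext x
      simp only [Set.mem_insert_iff, Set.mem_setOf_eq]
      constructor
      · rintro (rfl | ⟨_, h2, h3⟩)
        · exact ⟨huv, fun h => hwu h.symm⟩
        · exact ⟨h2, h3⟩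
      · intro hx
        by_cases hxu : x = u
        · exact Or.inl hxu
        · exact Or.inr ⟨hxu, hx.1, hx.2⟩
    rw [hset] at h
    exact h
  -- single-vertex deletions
  have hsingle : ∀ w : V, (G.induce {x : V | x ≠ w}).Connected := by
    intro w
    by_cases hwv : w = v
    · subst hwv
      obtain ⟨y, hy, hyv, _⟩ := aux_nbr G (hdeg u) w w
      have hmem : y ∈ {x : V | x ≠ u ∧ x ≠ w} := ⟨hy.ne', hyv⟩
      have h := aux_insert G hmem hy hGuv
      have hset : insert u {x : V | x ≠ u ∧ x ≠ w} = {x : V | x ≠ w} := by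
        ext x
        simp only [Set.mem_insert_iff, Set.mem_setOf_eq]
        constructor
        · rintro (rfl | ⟨_, h2⟩)
          · exact huv
          · exact h2
        · intro hx
          by_cases hxu : x = u
          · exact Or.inl hxu
          · exact Or.inr ⟨hxu, hx⟩
      rw [hset] at h
      exact h
    by_cases hwu : w = u
    · subst hwu
      obtain ⟨y, hy, hyu, _⟩ := aux_nbr G (hdeg v) w w
      have hmem : y ∈ {x : V | x ≠ w ∧ x ≠ v} := ⟨hyu, hy.ne'⟩
      have h := aux_insert G hmem hy hGuv
      have hset : insert v {x : V | x ≠ w ∧ x ≠ v} = {x : V | x ≠ w} := by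
        ext x
        simp only [Set.mem_insert_iff, Set.mem_setOf_eq]
        constructor
        · rintro (rfl | ⟨h1, _⟩)
          · exact huv.symm
          · exact h1
        · intro hx
          by_cases hxv : x = v
          · exact Or.inl hxv
          · exact Or.inr ⟨hx, hxv⟩
      rw [hset] at h
      exact h
    · refine aux_lift G hadj (P := fun x => x ≠ w) (Ne.symm hwu) (Ne.symm hwv) ?_
      have h := hbi ⟨w, hwv⟩
      have hset : {y : {x : V // x ≠ v} | y ≠ ⟨w, hwv⟩} =
          {y : {x : V // x ≠ v} | (y : V) ≠ w} := by
        ext y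
        simp only [Set.mem_setOf_eq, Ne, Subtype.ext_iff]
      rw [hset] at h
      exact h
  -- generic pair deletions avoiding u and v
  have case_ww : ∀ a b : V, a ≠ b → a ≠ u → a ≠ v → b ≠ u → b ≠ v →
      (G.induce {x : V | x ≠ a ∧ x ≠ b}).Connected := by
    intro a b hab hau hav hbu hbv
    refine aux_lift G hadj (P := fun x => x ≠ a ∧ x ≠ b)
      ⟨fun h => hau h.symm, fun h => hbu h.symm⟩
      ⟨fun h => hav h.symm, fun h => hbv h.symm⟩ ?_
    have h := hpairs ⟨a, hav⟩ ⟨b, hbv⟩ (fun h => hab (congrArg Subtype.val h))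
    have hset : {y : {x : V // x ≠ v} | y ≠ ⟨a, hav⟩ ∧ y ≠ ⟨b, hbv⟩} =
        {y : {x : V // x ≠ v} | (y : V) ≠ a ∧ (y : V) ≠ b} := by
      ext y
      simp only [Set.mem_setOf_eq, Ne, Subtype.ext_iff]
    rw [hset] at h
    exact h
  have symm_set : ∀ a b : V, {x : V | x ≠ a ∧ x ≠ b} = {x : V | x ≠ b ∧ x ≠ a} := by
    intro a b
    ext x
    exact and_comm
  refine ⟨⟨?_, hconn, hsingle⟩, ?_⟩
  · exact le_trans hcard3 (Nat.card_le_card_of_injective _ Subtype.val_injective)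
  · intro a b hab
    by_cases hau : a = u
    · subst hau
      by_cases hbv : b = v
      · subst hbv
        exact hGuv
      · exact case_uw b (Ne.symm hab) hbv
    by_cases hav : a = v
    · subst hav
      by_cases hbu : b = u
      · subst hbu
        rw [symm_set]
        exact hGuv
      · exact case_vw b hbu (Ne.symm hab)
    by_cases hbu : b = u
    · subst hbu
      rw [symm_set]
      exact case_uw a hau hav
    by_cases hbv : b = v
    · subst hbv
      rw [symm_set]
      exact case_vw a hau hav
    · exact case_ww a b hab hau hav hbu hbv
end
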